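/- MOTP is not a metric: for every threshold thr > 0 there exist T ∈ ℕ and configurations A, B, C, each consisting of m = 2 hole-free trajectories of length T taking values in ℝ, such that for every CLEAR-MOT association Σ_AB for (A, B), every CLEAR-MOT association Σ_AC for (A, C), and every CLEAR-MOT association Σ_CB for (C, B) (all with threshold thr), one has Σ_{t=1}^{T} Σ_{i=1}^{2} |A_i(t) − B_{σ_AB(t)(i)}(t)| > Σ_{t=1}^{T} Σ_{i=1}^{2} |A_i(t) − C_{σ_AC(t)(i)}(t)| + Σ_{t=1}^{T} Σ_{i=1}^{2} |C_i(t) − B_{σ_CB(t)(i)}(t)|; that is, the MOTP distance violates the triangle inequality. -/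

import Mathlib

/-!
Take `c = thr / 2` and frames `0, 1, 2, 3`. `A` is static at `(0, c)`; `B` is `A` with its two
points exchanged at frame `0` and equal to `A` afterwards; `C` is `A` except at frame `1`, where
it is `(-c, 2c)`. CLEAR-MOT matches `A` to `B` crosswise at frame `0`, and this match stays
anchored (distance `c < thr`), costing `2c` at each later frame: `MOTP(A, B) = 6c`. The match
of `A` to `C` is the identity throughout, so `MOTP(A, C) = 2c`. The match of `C` to `B` starts
crosswise, but at frame `1` both crosswise distances equal `thr`, the anchor is lost and the
match switches to the identity for good: `MOTP(C, B) = 2c`.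
-/

/-- `Σ` is a CLEAR-MOT association for `(A, B)` with threshold `thr`: `σ(1)` is a
minimum-cost matching, and at each later instant the matches within distance `thr` are
anchored while the remaining components are chosen to minimize the cost among all
permutations respecting the anchored matches. -/
def IsClearMot {m T : ℕ} (thr : ℝ) (A B : Fin m → Fin T → ℝ)
    (S : Fin T → Equiv.Perm (Fin m)) : Prop :=
  (∀ (h0 : 0 < T) (σ : Equiv.Perm (Fin m)),
    ∑ i, |A i ⟨0, h0⟩ - B (S ⟨0, h0⟩ i) ⟨0, h0⟩|
      ≤ ∑ i, |A i ⟨0, h0⟩ - B (σ i) ⟨0, h0⟩|) ∧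
  ∀ t : Fin (T - 1),
    let prev : Fin T := ⟨t.1, by have := t.2; omega⟩
    let cur : Fin T := ⟨t.1 + 1, by have := t.2; omega⟩
    (∀ i, |A i cur - B (S prev i) cur| < thr → S cur i = S prev i) ∧
    ∀ σ : Equiv.Perm (Fin m),
      (∀ i, |A i cur - B (S prev i) cur| < thr → σ i = S prev i) →
      ∑ i, |A i cur - B (S cur i) cur| ≤ ∑ i, |A i cur - B (σ i) cur|

/-- The MOTP distance associated to an association `Σ`:
`∑_{t} ∑_{i} |A_i(t) − B_{σ(t)(i)}(t)|`. -/
def motp {m T : ℕ} (A B : Fin m → Fin T → ℝ) (S : Fin T → Equiv.Perm (Fin m)) : ℝ :=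
  ∑ t, ∑ i, |A i t - B (S t i) t|

open Equiv

lemma Equiv.Perm.eq_one_or_eq_swap_of_fin_two (σ : Perm (Fin 2)) : σ = 1 ∨ σ = swap 0 1 := by
  revert σ; decide

lemma Equiv.Perm.eq_of_apply_eq_of_fin_two {σ τ : Perm (Fin 2)} {i : Fin 2} (h : σ i = τ i) :
    σ = τ := by
  revert σ τ i; decide

def matchCost {m T : ℕ} (A B : Fin m → Fin T → ℝ) (t : Fin T) (σ : Perm (Fin m)) : ℝ :=
  ∑ i, |A i t - B (σ i) t|

namespace IsClearMot

variable {m T : ℕ} {thr : ℝ} {A B : Fin m → Fin T → ℝ} {S : Fin T → Perm (Fin m)}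
  {σ : Perm (Fin m)}

theorem eq_of_first_frame (hS : IsClearMot thr A B S) (h0 : 0 < T)
    (hσ : ∀ τ ≠ σ, matchCost A B ⟨0, h0⟩ σ < matchCost A B ⟨0, h0⟩ τ) : S ⟨0, h0⟩ = σ := by
  by_contra h
  exact (hσ _ h).not_ge (hS.1 h0 σ)

theorem apply_succ_of_anchored (hS : IsClearMot thr A B S) {t : ℕ} (ht : t + 1 < T) {i : Fin m}
    (hi : |A i ⟨t + 1, ht⟩ - B (S ⟨t, by omega⟩ i) ⟨t + 1, ht⟩| < thr) :
    S ⟨t + 1, ht⟩ i = S ⟨t, by omega⟩ i :=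
  (hS.2 ⟨t, by omega⟩).1 i hi

theorem eq_succ_of_unanchored (hS : IsClearMot thr A B S) {t : ℕ} (ht : t + 1 < T)
    (hfree : ∀ i, thr ≤ |A i ⟨t + 1, ht⟩ - B (S ⟨t, by omega⟩ i) ⟨t + 1, ht⟩|)
    (hσ : ∀ τ ≠ σ, matchCost A B ⟨t + 1, ht⟩ σ < matchCost A B ⟨t + 1, ht⟩ τ) :
    S ⟨t + 1, ht⟩ = σ := by
  by_contra h
  exact (hσ _ h).not_ge <| (hS.2 ⟨t, by omega⟩).2 σ fun i hi => absurd hi (hfree i).not_gt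

end IsClearMot

theorem IsClearMot.eq_of_anchored {T : ℕ} {thr : ℝ} {A B : Fin 2 → Fin T → ℝ}
    {S : Fin T → Perm (Fin 2)} (hS : IsClearMot thr A B S) {σ : Perm (Fin 2)} {t₀ : Fin T}
    (h₀ : S t₀ = σ) (hanchored : ∀ t, t₀ < t → ∃ i, |A i t - B (σ i) t| < thr) :
    ∀ t, t₀ ≤ t → S t = σ := by
  rintro ⟨t, hT⟩ ht
  induction t with
  | zero => rwa [(Fin.ext (Nat.le_zero.1 ht) : t₀ = ⟨0, hT⟩)] at h₀
  | succ s ih =>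
    rcases ht.lt_or_eq with hlt | rfl
    · have hprev : S ⟨s, by omega⟩ = σ := ih _ (Nat.le_of_lt_succ hlt)
      obtain ⟨i, hi⟩ := hanchored _ hlt
      exact Perm.eq_of_apply_eq_of_fin_two <|
        (hS.apply_succ_of_anchored hT (by rwa [hprev])).trans (by rw [hprev])
    · exact h₀

namespace MotpCounterexample

def A (c : ℝ) : Fin 2 → Fin 4 → ℝ := fun i _ => ![0, c] i

def B (c : ℝ) : Fin 2 → Fin 4 → ℝ := fun i t => if t = 0 then ![c, 0] i else ![0, c] i

def C (c : ℝ) : Fin 2 → Fin 4 → ℝ := fun i t => if t = 1 then ![-c, 2 * c] i else ![0, c] i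

variable {c : ℝ} {S : Fin 4 → Perm (Fin 2)}

theorem motp_A_B (hc : 0 < c) (hS : IsClearMot (2 * c) (A c) (B c) S) :
    motp (A c) (B c) S = 6 * c := by
  have hfirst : S 0 = swap 0 1 := hS.eq_of_first_frame (by norm_num) fun τ hτ => by
    obtain rfl := τ.eq_one_or_eq_swap_of_fin_two.resolve_right hτ
    simp [matchCost, A, B, abs_of_pos hc, abs_neg]
    linarith
  have hswap : ∀ t, S t = swap 0 1 := fun t => hS.eq_of_anchored hfirst (fun t ht => ⟨0, by
    simp [A, B, ht.ne', abs_of_pos hc, abs_neg]; linarith⟩) t (Fin.zero_le t)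
  simp [motp, hswap, Fin.sum_univ_four, A, B, abs_of_pos hc]
  ring

theorem motp_A_C (hc : 0 < c) (hS : IsClearMot (2 * c) (A c) (C c) S) :
    motp (A c) (C c) S = 2 * c := by
  have hfirst : S 0 = 1 := hS.eq_of_first_frame (by norm_num) fun τ hτ => by
    obtain rfl := τ.eq_one_or_eq_swap_of_fin_two.resolve_left hτ
    simp [matchCost, A, C, abs_of_pos hc, abs_neg]
    linarith
  have hid : ∀ t, S t = 1 := fun t => hS.eq_of_anchored hfirst (fun t ht => ⟨0, by
    simp [A, C]; split_ifs <;> simp [abs_of_pos hc, abs_neg] <;> linarith⟩) t (Fin.zero_le t)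
  simp [motp, hid, Fin.sum_univ_four, A, C, abs_of_pos hc, abs_neg, two_mul]

theorem motp_C_B (hc : 0 < c) (hS : IsClearMot (2 * c) (C c) (B c) S) :
    motp (C c) (B c) S = 2 * c := by
  have hfirst : S 0 = swap 0 1 := hS.eq_of_first_frame (by norm_num) fun τ hτ => by
    obtain rfl := τ.eq_one_or_eq_swap_of_fin_two.resolve_right hτ
    simp [matchCost, C, B, abs_of_pos hc, abs_neg]
    linarith
  have hgap : |-c - c| = 2 * c := by rw [abs_of_neg (by linarith)]; ring
  have hgap' : |2 * c - c| = c := by rw [two_mul, add_sub_cancel_right, abs_of_pos hc]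
  have hsecond : S 1 = 1 := hS.eq_succ_of_unanchored (t := 0) (by norm_num) (fun i => by
      fin_cases i <;> simp [C, B, hfirst, abs_of_pos hc, hgap]) fun τ hτ => by
    obtain rfl := τ.eq_one_or_eq_swap_of_fin_two.resolve_left hτ
    simp [matchCost, C, B, abs_of_pos hc, hgap, hgap']
    linarith
  have hid : ∀ t, 1 ≤ t → S t = 1 := hS.eq_of_anchored hsecond (fun t ht => ⟨0, by
    simp [C, B, ht.ne', (zero_lt_one.trans ht).ne', hc]⟩)
  simp [motp, hfirst, hid, Fin.sum_univ_four, C, B, abs_of_pos hc, abs_neg, two_mul]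

end MotpCounterexample

/-- MOTP is not a metric: for every threshold `thr > 0` there exist `T` and
configurations `A, B, C` of `m = 2` hole-free real-valued trajectories such that the
MOTP distances (computed along any CLEAR-MOT associations) violate the triangle
inequality: `MOTP(A, B) > MOTP(A, C) + MOTP(C, B)`. -/
theorem motp_not_metric (thr : ℝ) (hthr : 0 < thr) :
    ∃ (T : ℕ) (A B C : Fin 2 → Fin T → ℝ),
      ∀ SAB SAC SCB : Fin T → Equiv.Perm (Fin 2),
        IsClearMot thr A B SAB → IsClearMot thr A C SAC → IsClearMot thr C B SCB →
        motp A C SAC + motp C B SCB < motp A B SAB := by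
  obtain ⟨c, hc, rfl⟩ : ∃ c, 0 < c ∧ thr = 2 * c := ⟨thr / 2, by positivity, by ring⟩
  refine ⟨4, MotpCounterexample.A c, MotpCounterexample.B c, MotpCounterexample.C c,
    fun SAB SAC SCB hAB hAC hCB => ?_⟩
  rw [MotpCounterexample.motp_A_B hc hAB, MotpCounterexample.motp_A_C hc hAC,
    MotpCounterexample.motp_C_B hc hCB]
  linarith
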